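/- arXiv:2210.00659 — 5 statements merged into one kernel-verified Lean document; each statement's English description precedes it below -/
import Mathlib

section
/- Let K be a field containing an element σ with σ² + 2σ − 1 = 0 (i.e. σ = −1 ± √2), let f(x,y) = x²y + x² + y² − y, and let Ā(z) = (−z + σ)/(σz + 1). Then for all x, y in K with σx + 1 ≠ 0 and σy + 1 ≠ 0, one has (σx+1)²·(σy+1)²·f(Ā(x), Ā(y)) = 8·σ²·f(y, x). -/
/-- Let `K` be a field containing `σ` with `σ² + 2σ - 1 = 0`, let
`f(x,y) = x²y + x² + y² - y` and `Ā(z) = (-z + σ)/(σz + 1)`.  Then for all `x, y`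
with `σx + 1 ≠ 0` and `σy + 1 ≠ 0`,
`(σx+1)²(σy+1)²·f(Ā(x), Ā(y)) = 8σ²·f(y, x)`. -/
theorem f_Abar_transformation (K : Type*) [Field K] (σ : K) (hσ : σ ^ 2 + 2 * σ - 1 = 0)
    (x y : K) (hx : σ * x + 1 ≠ 0) (hy : σ * y + 1 ≠ 0) :
    (σ * x + 1) ^ 2 * (σ * y + 1) ^ 2 *
      (((-x + σ) / (σ * x + 1)) ^ 2 * ((-y + σ) / (σ * y + 1)) +
        ((-x + σ) / (σ * x + 1)) ^ 2 + ((-y + σ) / (σ * y + 1)) ^ 2 -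
        ((-y + σ) / (σ * y + 1))) =
      8 * σ ^ 2 * (y ^ 2 * x + y ^ 2 + x ^ 2 - x) := by
  have hA0 : (-x + σ) / (σ * x + 1) * (σ * x + 1) = -x + σ := div_mul_cancel₀ _ hx
  have hB0 : (-y + σ) / (σ * y + 1) * (σ * y + 1) = -y + σ := div_mul_cancel₀ _ hy
  generalize hA : (-x + σ) / (σ * x + 1) = A at hA0 ⊢
  generalize hB : (-y + σ) / (σ * y + 1) = B at hB0 ⊢
  have key : (σ * x + 1) ^ 2 * (σ * y + 1) ^ 2 * (A ^ 2 * B + A ^ 2 + B ^ 2 - B)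
      = (-x + σ) ^ 2 * (-y + σ) * (σ * y + 1) + (-x + σ) ^ 2 * (σ * y + 1) ^ 2
        + (-y + σ) ^ 2 * (σ * x + 1) ^ 2 - (-y + σ) * (σ * x + 1) ^ 2 * (σ * y + 1) := by
    linear_combination (((σ * y + 1) * (-y + σ) + (σ * y + 1) ^ 2)
        * (A * (σ * x + 1) + (-x + σ))) * hA0
      + (A ^ 2 * (σ * x + 1) ^ 2 * (σ * y + 1)
        + (σ * x + 1) ^ 2 * (B * (σ * y + 1) + (-y + σ))
        - (σ * x + 1) ^ 2 * (σ * y + 1)) * hB0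
  rw [key]
  linear_combination (x ^ 2 * y - y - y ^ 2 - x ^ 2
    + σ * (-4 * x * y - 3 * y ^ 2 + 1 - 2 * x * y ^ 2 + 2 * x + x ^ 2 * y ^ 2 - 3 * x ^ 2)
    + σ ^ 2 * (y + y ^ 2 + x ^ 2 - x ^ 2 * y)) * hσ
end

section
/- Let K be a field containing an element σ with σ² + 2σ − 1 = 0 (i.e. σ = −1 ± √2), let g(x,y) = y² − (x² − 4x + 1)y + x², and let t(z) = (z − σ²)/(σ²z − 1). Then for all x, y in K with σ²x − 1 ≠ 0 and σ²y − 1 ≠ 0, one has (σ²x−1)²·(σ²y−1)²·g(t(x), t(y)) = 32·σ⁴·g(y, x). -/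
set_option maxRecDepth 10000
set_option maxHeartbeats 2000000


/-- Let `K` be a field containing `σ` with `σ² + 2σ - 1 = 0`, let
`g(x,y) = y² - (x² - 4x + 1)y + x²` and `t(z) = (z - σ²)/(σ²z - 1)`.  Then for all
`x, y` with `σ²x - 1 ≠ 0` and `σ²y - 1 ≠ 0`,
`(σ²x-1)²(σ²y-1)²·g(t(x), t(y)) = 32σ⁴·g(y, x)`. -/
theorem g_t_transformation (K : Type*) [Field K] (σ : K) (hσ : σ ^ 2 + 2 * σ - 1 = 0)
    (x y : K) (hx : σ ^ 2 * x - 1 ≠ 0) (hy : σ ^ 2 * y - 1 ≠ 0) :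
    (σ ^ 2 * x - 1) ^ 2 * (σ ^ 2 * y - 1) ^ 2 *
      (((y - σ ^ 2) / (σ ^ 2 * y - 1)) ^ 2 -
        (((x - σ ^ 2) / (σ ^ 2 * x - 1)) ^ 2 - 4 * ((x - σ ^ 2) / (σ ^ 2 * x - 1)) + 1) *
          ((y - σ ^ 2) / (σ ^ 2 * y - 1)) +
        ((x - σ ^ 2) / (σ ^ 2 * x - 1)) ^ 2) =
      32 * σ ^ 4 * (x ^ 2 - (y ^ 2 - 4 * y + 1) * x + y ^ 2) := by
  set a := (x - σ ^ 2) / (σ ^ 2 * x - 1) with ha_def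
  set b := (y - σ ^ 2) / (σ ^ 2 * y - 1) with hb_def
  have ha : (σ ^ 2 * x - 1) * a = x - σ ^ 2 := by
    rw [ha_def, mul_div_cancel₀ _ hx]
  have hb : (σ ^ 2 * y - 1) * b = y - σ ^ 2 := by
    rw [hb_def, mul_div_cancel₀ _ hy]
  linear_combination (((σ ^ 2 * x - 1) * a + x - σ ^ 2) * (σ ^ 2 * y - 1) ^ 2
      - ((σ ^ 2 * x - 1) * a + x - σ ^ 2 - 4 * (σ ^ 2 * x - 1)) * (σ ^ 2 * y - 1) ^ 2 * b) * ha +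
    ((σ ^ 2 * x - 1) ^ 2 * ((σ ^ 2 * y - 1) * b + y - σ ^ 2)
      - ((x - σ ^ 2) ^ 2 - 4 * (σ ^ 2 * x - 1) * (x - σ ^ 2) + (σ ^ 2 * x - 1) ^ 2) * (σ ^ 2 * y - 1)) * hb +
    ((-1)*y + (-1)*y^2 + (-4)*x*y + (-1)*x^2 + (-1)*x^2*y + (-2)*σ*y + (-2)*σ*y^2 + (-8)*σ*x*y + (-2)*σ*x^2 + (-2)*σ*x^2*y + σ^2 + σ^2*y + (-4)*σ^2*y^2 + (6)*σ^2*x + (-16)*σ^2*x*y + (6)*σ^2*x*y^2 + (-4)*σ^2*x^2 + σ^2*x^2*y + σ^2*x^2*y^2 + (2)*σ^3 + (-10)*σ^3*y^2 + (12)*σ^3*x + (-40)*σ^3*x*y + (12)*σ^3*x*y^2 + (-10)*σ^3*x^2 + (2)*σ^3*x^2*y^2 + (-1)*σ^4 + (-1)*σ^4*y + (4)*σ^4*y^2 + (-6)*σ^4*x + (16)*σ^4*x*y + (-6)*σ^4*x*y^2 + (4)*σ^4*x^2 + (-1)*σ^4*x^2*y + (-1)*σ^4*x^2*y^2 + (-2)*σ^5*y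 + (-2)*σ^5*y^2 + (-8)*σ^5*x*y + (-2)*σ^5*x^2 + (-2)*σ^5*x^2*y + σ^6*y + σ^6*y^2 + (4)*σ^6*x*y + σ^6*x^2 + σ^6*x^2*y) * hσ
end

section
/- In ℝ (or any field containing √2), let σ = −1 + √2, f(x,y) = x²y + x² + y² − y, F₂(X,Y) = X² + Y² − σ²(1 + X²Y²), and Ā(z) = (−z + σ)/(σz + 1). Then for all x, y with σy + 1 ≠ 0, one has (σy+1)²·F₂(x, Ā(y)) = 4√2·σ²·f(x, y). -/
/-- In `ℝ`, let `σ = -1 + √2`, `f(x,y) = x²y + x² + y² - y`,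
`F₂(X,Y) = X² + Y² - σ²(1 + X²Y²)` and `Ā(z) = (-z + σ)/(σz + 1)`.  Then for all
`x, y` with `σy + 1 ≠ 0`, `(σy+1)²·F₂(x, Ā(y)) = 4√2·σ²·f(x, y)`. -/
theorem F2_Abar_transformation (σ : ℝ) (hσ : σ = -1 + Real.sqrt 2)
    (x y : ℝ) (hy : σ * y + 1 ≠ 0) :
    (σ * y + 1) ^ 2 *
      (x ^ 2 + ((-y + σ) / (σ * y + 1)) ^ 2 -
        σ ^ 2 * (1 + x ^ 2 * ((-y + σ) / (σ * y + 1)) ^ 2)) =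
      4 * Real.sqrt 2 * σ ^ 2 * (x ^ 2 * y + x ^ 2 + y ^ 2 - y) := by
  have hs : Real.sqrt 2 ^ 2 = 2 := Real.sq_sqrt (by norm_num)
  subst hσ
  set s := Real.sqrt 2 with hsdef
  field_simp
  linear_combination (-2*y + 2*x^2*y - y^2*s^2 + 2*y*s - 2*x^2*y*s - x^2*s^2) * hs
end

section
/- With f(x,y) = x²y + x² + y² − y and Rₙ(x) = R⁽ⁿ⁾(x,x) defined by the iterated resultants R⁽¹⁾(x, x₁) = f(x, x₁), R⁽ⁿ⁾(x, xₙ) = Res_{x_{n−1}}( R⁽ⁿ⁻¹⁾(x, x_{n−1}), f(x_{n−1}, xₙ) ), the polynomial Rₙ(x) ∈ ℤ[x] has degree exactly 2^{n+1} − 1, for every n ≥ 1. -/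
open Polynomial

/-- The Sylvester matrix of two polynomials `p, q` over a commutative ring, of size
`(natDegree q + natDegree p)`: the first `natDegree q` rows contain the shifted
coefficient sequences of `p`, the remaining `natDegree p` rows those of `q`. -/
noncomputable def sylvesterMatrix {R : Type*} [CommRing R] (p q : R[X]) :
    Matrix (Fin (q.natDegree + p.natDegree)) (Fin (q.natDegree + p.natDegree)) R :=
  fun i j =>
    if (i : ℕ) < q.natDegree then
      (if (i : ℕ) ≤ (j : ℕ) then p.coeff ((j : ℕ) - (i : ℕ)) else 0)
    else
      (if (i : ℕ) - q.natDegree ≤ (j : ℕ) then q.coeff ((j : ℕ) - ((i : ℕ) - q.natDegree))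
       else 0)

/-- The resultant of two polynomials with respect to their common variable,
as the determinant of the Sylvester matrix. -/
noncomputable def resultant {R : Type*} [CommRing R] (p q : R[X]) : R :=
  (sylvesterMatrix p q).det

/-- `f(x, y) = x²y + x² + y² - y` as an element of `ℤ[x][y]`
(inner variable `x`, outer variable `y`). -/
noncomputable def fXY : Polynomial (Polynomial ℤ) :=
  C (X ^ 2) * X + C (X ^ 2) + X ^ 2 - X

/-- `f(t, y) = t²y + t² + y² - y` as a polynomial in `t` with coefficients in
`ℤ[x][y]` (so that the resultant with respect to `t` can be formed). -/
noncomputable def fTY : Polynomial (Polynomial (Polynomial ℤ)) :=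
  X ^ 2 * C X + X ^ 2 + C (X ^ 2 - X)

/-- The iterated resultants `R⁽ⁿ⁾(x, xₙ) ∈ ℤ[x][xₙ]`:
`R⁽¹⁾(x, x₁) = f(x, x₁)` and
`R⁽ⁿ⁾(x, xₙ) = Res_{x_{n-1}}(R⁽ⁿ⁻¹⁾(x, x_{n-1}), f(x_{n-1}, xₙ))` for `n ≥ 2`
(the value at `0` is an irrelevant placeholder). -/
noncomputable def Rres : ℕ → Polynomial (Polynomial ℤ)
  | 0 => fXY
  | 1 => fXY
  | n + 2 => _root_.resultant ((Rres (n + 1)).map Polynomial.C) fTY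


/-!
Write `D = 2ⁿ` and view `R⁽ⁿ⁾` in `ℤ[x][y]`. By induction it is monic of degree `D` in `y`,
of degree at most `D` in `x`, and its `x^D`-part is a polynomial in `y` of degree exactly
`D - 1`. As `D ≥ 2`, every monomial of `R⁽ⁿ⁾` other than `x^D y^(D-1)` then has total degree
below `2D - 1`, and that one has a nonzero coefficient; so `Rₙ(x) = R⁽ⁿ⁾(x, x)` has degree
`2D - 1`.

The invariant propagates because in the Sylvester matrix of `Res_t(f(t, y), R⁽ⁿ⁾(x, t))` the
columns coming from one polynomial share a degree bound, in `x` as well as in `y`; the top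
coefficient of the determinant is then the resultant of the top coefficients. In `y` this is
`Res(1, R⁽ⁿ⁾) = 1`. In `x` it is `Res(f, ℓ)` taken with formal degree `D` for the `x^D`-part
`ℓ` of degree `D - 1`, that is `(y + 1) · Res(f, ℓ)`, whose degree is `1 + 2(D - 1)`.
-/

namespace Polynomial

variable {R : Type*} [CommRing R]

theorem coeff_prod_sum_of_natDegree_le {ι : Type*} (s : Finset ι) (f : ι → R[X]) (δ : ι → ℕ)
    (h : ∀ i ∈ s, (f i).natDegree ≤ δ i) :
    (∏ i ∈ s, f i).coeff (∑ i ∈ s, δ i) = ∏ i ∈ s, (f i).coeff (δ i) := by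
  induction s using Finset.cons_induction with
  | empty => simp
  | cons a s has ih =>
    simp only [Finset.forall_mem_cons] at h
    rw [Finset.prod_cons, Finset.sum_cons, Finset.prod_cons,
      coeff_mul_add_eq_of_natDegree_le h.1
        ((natDegree_prod_le _ _).trans (Finset.sum_le_sum h.2)), ih h.2]

section Det

variable {n : Type*} [Fintype n] [DecidableEq n] {M : Matrix n n R[X]} {δ : n → ℕ}

theorem natDegree_det_le_of_natDegree_le (h : ∀ i j, (M i j).natDegree ≤ δ j) :
    M.det.natDegree ≤ ∑ j, δ j := by
  rw [Matrix.det_apply]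
  refine natDegree_sum_le_of_forall_le _ _ fun σ _ => ?_
  rw [Units.smul_def]
  exact (natDegree_smul_le _ _).trans
    ((natDegree_prod_le _ _).trans (Finset.sum_le_sum fun j _ => h _ j))

theorem coeff_det_of_natDegree_le (h : ∀ i j, (M i j).natDegree ≤ δ j) :
    M.det.coeff (∑ j, δ j) = (Matrix.of fun i j => (M i j).coeff (δ j)).det := by
  simp only [Matrix.det_apply, finsetSum_coeff, Units.smul_def, coeff_smul, Matrix.of_apply]
  refine Finset.sum_congr rfl fun σ _ => ?_
  rw [coeff_prod_sum_of_natDegree_le _ _ _ fun j _ => h _ j]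

end Det

theorem coeff_coeff_swap (p : R[X][X]) (i k : ℕ) :
    ((Bivariate.swap p).coeff i).coeff k = (p.coeff k).coeff i := by
  induction p using Polynomial.induction_on' with
  | add p q hp hq => simp [hp, hq]
  | monomial n f =>
    rw [Bivariate.swap_monomial, coeff_mul_C, coeff_map, coeff_C_mul_X_pow, coeff_monomial]
    split_ifs <;> simp_all

theorem natDegree_coeff_le_of_natDegree_swap_le {p : R[X][X]} {d : ℕ}
    (h : (Bivariate.swap p).natDegree ≤ d) (k : ℕ) : (p.coeff k).natDegree ≤ d := by
  rw [natDegree_le_iff_coeff_eq_zero]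
  intro j hj
  rw [← coeff_coeff_swap, coeff_eq_zero_of_natDegree_lt (h.trans_lt hj), coeff_zero]

theorem swap_map_C_coeff_zero (q : R[X]) : (Bivariate.swap (q.map C)).coeff 0 = q := by
  rw [Bivariate.swap_map_C, coeff_C_zero]

theorem swap_map_mapRingHom_C_coeff (p : R[X][X]) (d : ℕ) :
    (Bivariate.swap (p.map (mapRingHom C))).coeff d = ((Bivariate.swap p).coeff d).map C := by
  ext k : 1
  simp [coeff_coeff_swap]

theorem natDegree_coeff_map_C (q : R[X]) (k : ℕ) : ((q.map C).coeff k).natDegree = 0 := by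
  rw [coeff_map, natDegree_C]

section Sylvester

variable {f g : R[X][X]} {m n d e : ℕ}

theorem natDegree_sylvester_le (hf : ∀ k, (f.coeff k).natDegree ≤ d)
    (hg : ∀ k, (g.coeff k).natDegree ≤ e) (i j : Fin (m + n)) :
    (sylvester f g m n i j).natDegree ≤ Fin.addCases (fun _ => e) (fun _ => d) j := by
  induction j using Fin.addCases <;>
  · simp only [sylvester, Matrix.of_apply, Fin.addCases_left, Fin.addCases_right]
    split_ifs <;> simp [hf, hg]

theorem natDegree_resultant_le_of_natDegree_coeff_le (hf : ∀ k, (f.coeff k).natDegree ≤ d)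
    (hg : ∀ k, (g.coeff k).natDegree ≤ e) :
    (f.resultant g m n).natDegree ≤ m * e + n * d := by
  have := natDegree_det_le_of_natDegree_le (natDegree_sylvester_le (m := m) (n := n) hf hg)
  simpa [Fin.sum_univ_add, resultant] using this

theorem coeff_resultant_of_natDegree_coeff_le (hf : ∀ k, (f.coeff k).natDegree ≤ d)
    (hg : ∀ k, (g.coeff k).natDegree ≤ e) :
    (f.resultant g m n).coeff (m * e + n * d) =
      ((Bivariate.swap f).coeff d).resultant ((Bivariate.swap g).coeff e) m n := by
  have := coeff_det_of_natDegree_le (natDegree_sylvester_le (m := m) (n := n) hf hg)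
  simp only [Fin.sum_univ_add, Fin.addCases_left, Fin.addCases_right, Finset.sum_const,
    Finset.card_univ, Fintype.card_fin, smul_eq_mul] at this
  rw [resultant, this, resultant]
  congr 1
  ext i j
  induction j using Fin.addCases <;>
  · simp only [sylvester, Matrix.of_apply, Fin.addCases_left, Fin.addCases_right]
    split_ifs <;> simp [coeff_coeff_swap]

end Sylvester

section EvalX

variable {q : R[X][X]} {m d : ℕ}

theorem natDegree_eval_X_le (hq : q.natDegree ≤ m) (hc : ∀ k, (q.coeff k).natDegree ≤ d) :
    (q.eval X).natDegree ≤ m + d := by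
  rw [eval_eq_sum_range' (Nat.lt_succ_of_le hq)]
  refine natDegree_sum_le_of_forall_le _ _ fun k hk => ?_
  have := Finset.mem_range_succ_iff.mp hk
  exact (natDegree_mul_le_of_le (hc k) (natDegree_X_pow_le k)).trans (by omega)

theorem coeff_eval_X (hq : q.natDegree ≤ m) (hc : ∀ k, (q.coeff k).natDegree ≤ d) :
    (q.eval X).coeff (m + d) = (q.coeff m).coeff d := by
  rw [eval_eq_sum_range' (Nat.lt_succ_of_le hq), finsetSum_coeff,
    Finset.sum_eq_single m (fun k hk hkm => ?_) (by simp), coeff_mul_X_pow', if_pos (by omega),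
    Nat.add_sub_cancel_left]
  have := Finset.mem_range_succ_iff.mp hk
  rw [coeff_mul_X_pow', if_pos (by omega)]
  exact coeff_eq_zero_of_natDegree_lt ((hc k).trans_lt (by omega))

end EvalX

end Polynomial

theorem resultant_eq_polynomial_resultant {R : Type*} [CommRing R] (p q : R[X]) :
    _root_.resultant p q = q.resultant p := by
  unfold _root_.resultant Polynomial.resultant
  rw [← Matrix.det_transpose]
  congr 1
  ext i j
  induction j using Fin.addCases with
  | left j =>
    simp only [sylvesterMatrix, sylvester, Matrix.transpose_apply, Matrix.of_apply,
      Fin.addCases_left, Fin.val_castAdd, j.isLt, if_true, Set.mem_Icc]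
    split_ifs <;> first | rfl | omega | exact coeff_eq_zero_of_natDegree_lt (by omega)
  | right j =>
    simp only [sylvesterMatrix, sylvester, Matrix.transpose_apply, Matrix.of_apply,
      Fin.addCases_right, Fin.val_natAdd, Set.mem_Icc, Nat.add_sub_cancel_left]
    split_ifs <;> first | rfl | omega | exact coeff_eq_zero_of_natDegree_lt (by omega)

/-- `f(t, y) = (y + 1) t² + y² - y` over an arbitrary base ring `R`, as a polynomial in the
outer variable `t` with coefficients in `R[y]`. -/
noncomputable def fT (R : Type*) [CommRing R] : R[X][X] :=
  C (X + 1) * X ^ 2 + C (X ^ 2 - X)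

section fT

variable {R : Type*} [CommRing R]

theorem fTY_eq : fTY = fT ℤ[X] := by
  simp only [fTY, fT, C_add, C_1]
  ring

theorem coeff_fT (k : ℕ) :
    (fT R).coeff k = if k = 0 then X ^ 2 - X else if k = 2 then X + 1 else 0 := by
  rw [fT, coeff_add, coeff_C_mul_X_pow, coeff_C]
  rcases k with _ | _ | _ | k <;> simp

theorem natDegree_coeff_fT_le (k : ℕ) : ((fT R).coeff k).natDegree ≤ 2 := by
  rw [coeff_fT]
  split_ifs
  · exact (natDegree_sub_le _ _).trans
      (max_le (natDegree_X_pow_le 2) (natDegree_X_le.trans (by norm_num)))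
  · exact natDegree_add_le_of_degree_le (natDegree_X_le.trans (by norm_num)) (by simp)
  · simp

theorem natDegree_fT [Nontrivial R] : (fT R).natDegree = 2 := by
  refine natDegree_eq_of_le_of_coeff_ne_zero ?_ ?_
  · rw [natDegree_le_iff_coeff_eq_zero]
    intro k hk
    rw [coeff_fT, if_neg (by omega), if_neg (by omega)]
  · rw [coeff_fT]
    simpa using X_add_C_ne_zero (1 : R)

theorem swap_fT_coeff_two : (Bivariate.swap (fT R)).coeff 2 = 1 := by
  ext k
  rw [coeff_coeff_swap, coeff_fT, coeff_one]
  rcases k with _ | _ | _ | k <;> simp [coeff_X, coeff_one]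

theorem map_swap_fT :
    (fT R[X]).map (Bivariate.swap (R := R) : R[X][X] →+* R[X][X]) = (fT R).map C := by
  simp [fT, Bivariate.swap_Y]

theorem natDegree_resultant_fT_le (p : R[X]) (n : ℕ) :
    ((fT R).resultant (p.map C) 2 n).natDegree ≤ 2 * n := by
  simpa [mul_comm n] using natDegree_resultant_le_of_natDegree_coeff_le (m := 2) (n := n)
    natDegree_coeff_fT_le fun k => (natDegree_coeff_map_C p k).le

theorem coeff_resultant_fT (p : R[X]) (n : ℕ) :
    ((fT R).resultant (p.map C) 2 n).coeff (2 * n) = p.coeff n ^ 2 := by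
  have := coeff_resultant_of_natDegree_coeff_le (m := 2) (n := n)
    natDegree_coeff_fT_le fun k => (natDegree_coeff_map_C p k).le
  rw [mul_zero, zero_add, mul_comm n, swap_fT_coeff_two, swap_map_C_coeff_zero,
    resultant_one_left] at this
  rw [this, Even.neg_one_pow ⟨n, by ring⟩, one_mul]

theorem swap_resultant_fT (P : R[X][X]) (n : ℕ) :
    Bivariate.swap ((fT R[X]).resultant (P.map C) 2 n) =
      ((fT R).map C).resultant (P.map (mapRingHom C)) 2 n := by
  have : (Bivariate.swap (R := R) : R[X][X] →+* R[X][X]).comp C = mapRingHom C :=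
    RingHom.ext Bivariate.swap_C
  rw [← map_swap_fT, ← this, ← Polynomial.map_map, resultant_map_map]
  rfl

theorem natDegree_coeff_map_mapRingHom_C_le {P : R[X][X]} {D : ℕ}
    (hP : (Bivariate.swap P).natDegree ≤ D) (k : ℕ) :
    ((P.map (mapRingHom C)).coeff k).natDegree ≤ D := by
  rw [coeff_map, coe_mapRingHom]
  exact natDegree_map_le.trans (natDegree_coeff_le_of_natDegree_swap_le hP k)

theorem natDegree_swap_resultant_fT_le {P : R[X][X]} {D : ℕ}
    (hP : (Bivariate.swap P).natDegree ≤ D) :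
    (Bivariate.swap ((fT R[X]).resultant (P.map C) 2 D)).natDegree ≤ 2 * D := by
  rw [swap_resultant_fT]
  simpa using natDegree_resultant_le_of_natDegree_coeff_le (m := 2) (n := D)
    (fun k => (natDegree_coeff_map_C (fT R) k).le) (natDegree_coeff_map_mapRingHom_C_le hP)

theorem coeff_swap_resultant_fT {P : R[X][X]} {D : ℕ}
    (hP : (Bivariate.swap P).natDegree ≤ D) :
    (Bivariate.swap ((fT R[X]).resultant (P.map C) 2 D)).coeff (2 * D) =
      (fT R).resultant (((Bivariate.swap P).coeff D).map C) 2 D := by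
  have := coeff_resultant_of_natDegree_coeff_le (m := 2) (n := D)
    (fun k => (natDegree_coeff_map_C (fT R) k).le) (natDegree_coeff_map_mapRingHom_C_le hP)
  rwa [mul_zero, add_zero, swap_map_C_coeff_zero, swap_map_mapRingHom_C_coeff,
    ← swap_resultant_fT] at this

theorem degree_resultant_fT_of_degree_eq [IsDomain R] {p : R[X]} {D : ℕ} (hD : 1 ≤ D)
    (hp : p.degree = (D - 1 : ℕ)) :
    ((fT R).resultant (p.map C) 2 D).degree = (2 * D - 1 : ℕ) := by
  have hres : ((fT R).resultant (p.map C) 2 (D - 1)).degree = (2 * (D - 1) : ℕ) :=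
    degree_eq_of_le_of_coeff_ne_zero (degree_le_of_natDegree_le (natDegree_resultant_fT_le p _))
      (by rw [coeff_resultant_fT]; exact pow_ne_zero 2 (coeff_ne_zero_of_eq_degree hp))
  have hformal := resultant_add_right_deg (fT R) (p.map C) 2 (D - 1) 1
    (natDegree_map_le.trans (natDegree_le_of_degree_le hp.le))
  rw [Nat.sub_add_cancel hD, pow_one, coeff_fT] at hformal
  have hX : (X + 1 : R[X]).degree = 1 := by simpa using degree_X_add_C (1 : R)
  rw [hformal, if_neg (by omega), if_pos rfl, degree_mul, hX, hres]
  norm_cast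
  omega

end fT

/-- For `P ∈ R[x][y]`, `(Bivariate.swap P).coeff D` is the coefficient of `x^D`, a polynomial
in `y`. -/
structure HasBidegree {R : Type*} [CommRing R] (P : R[X][X]) (D : ℕ) : Prop where
  monic : P.Monic
  natDegree_eq : P.natDegree = D
  natDegree_swap_le : (Bivariate.swap P).natDegree ≤ D
  degree_swap_coeff : ((Bivariate.swap P).coeff D).degree = (D - 1 : ℕ)

namespace HasBidegree

variable {R : Type*} [CommRing R] {P : R[X][X]} {D : ℕ}

theorem resultant_fT [IsDomain R] (hP : HasBidegree P D) (hD : 1 ≤ D) :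
    HasBidegree ((fT R[X]).resultant (P.map C) 2 D) (2 * D) := by
  have hlead : ((fT R[X]).resultant (P.map C) 2 D).coeff (2 * D) = 1 := by
    rw [coeff_resultant_fT, ← hP.natDegree_eq, hP.monic.coeff_natDegree, one_pow]
  refine ⟨monic_of_natDegree_le_of_coeff_eq_one _ (natDegree_resultant_fT_le P D) hlead,
    natDegree_eq_of_le_of_coeff_ne_zero (natDegree_resultant_fT_le P D) (hlead ▸ one_ne_zero),
    natDegree_swap_resultant_fT_le hP.natDegree_swap_le, ?_⟩
  rw [coeff_swap_resultant_fT hP.natDegree_swap_le]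
  exact degree_resultant_fT_of_degree_eq hD hP.degree_swap_coeff

theorem degree_eval_X (hP : HasBidegree P D) (hD : 2 ≤ D) :
    (P.eval X).degree = (2 * D - 1 : ℕ) := by
  set Q := P.eraseLead
  have hQ : Q.natDegree ≤ D - 1 := hP.natDegree_eq ▸ eraseLead_natDegree_le P
  have hc k : (Q.coeff k).natDegree ≤ D := by
    rw [eraseLead_coeff]
    split_ifs
    · simp
    · exact natDegree_coeff_le_of_natDegree_swap_le hP.natDegree_swap_le k
  have hsplit : P.eval X = Q.eval X + X ^ D := by
    conv_lhs => rw [← eraseLead_add_monomial_natDegree_leadingCoeff P]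
    rw [hP.monic.leadingCoeff, hP.natDegree_eq, eval_add, eval_monomial, one_mul]
  have htop : (P.eval X).coeff (2 * D - 1) ≠ 0 := by
    rw [hsplit, coeff_add, coeff_X_pow, if_neg (by omega), add_zero,
      show 2 * D - 1 = D - 1 + D by omega, coeff_eval_X hQ hc,
      eraseLead_coeff_of_ne _ (by rw [hP.natDegree_eq]; omega), ← coeff_coeff_swap]
    exact coeff_ne_zero_of_eq_degree hP.degree_swap_coeff
  refine degree_eq_of_le_of_coeff_ne_zero (degree_le_of_natDegree_le ?_) htop
  rw [hsplit]
  exact natDegree_add_le_of_degree_le ((natDegree_eval_X_le hQ hc).trans (by omega))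
    ((natDegree_X_pow_le D).trans (by omega))

end HasBidegree

theorem hasBidegree_fXY : HasBidegree fXY 2 := by
  have hswap : Bivariate.swap fXY = fT ℤ := by
    simp only [fXY, fT, map_add, map_sub, map_mul, map_pow, Bivariate.swap_C, Bivariate.swap_Y,
      map_X, C_1]
    ring
  refine ⟨?_, ?_, by rw [hswap, natDegree_fT], ?_⟩
  · unfold fXY; monicity!
  · unfold fXY; compute_degree!
  · rw [hswap, coeff_fT]
    simpa using degree_X_add_C (1 : ℤ)

theorem Rres_succ {n : ℕ} (hn : 1 ≤ n) (hP : (Rres n).natDegree = 2 ^ n) :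
    Rres (n + 1) = (fT ℤ[X]).resultant ((Rres n).map C) 2 (2 ^ n) := by
  obtain ⟨k, rfl⟩ := Nat.exists_eq_add_of_le' hn
  rw [Rres, resultant_eq_polynomial_resultant, fTY_eq, natDegree_fT,
    natDegree_map_eq_of_injective C_injective, hP]

theorem hasBidegree_Rres {n : ℕ} (hn : 1 ≤ n) : HasBidegree (Rres n) (2 ^ n) := by
  induction n, hn using Nat.le_induction with
  | base => exact hasBidegree_fXY
  | succ n hn ih =>
    rw [Rres_succ hn ih.natDegree_eq, pow_succ, mul_comm]
    exact ih.resultant_fT Nat.one_le_two_pow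

/-- For every `n ≥ 1`, the polynomial `Rₙ(x) = R⁽ⁿ⁾(x, x) ∈ ℤ[x]` has degree
exactly `2^{n+1} - 1`. -/
theorem Rn_degree (n : ℕ) (hn : 1 ≤ n) :
    ((Rres n).eval X).degree = (2 ^ (n + 1) - 1 : ℕ) := by
  rw [(hasBidegree_Rres hn).degree_eval_X (Nat.le_self_pow (by omega) 2), pow_succ, mul_comm]
end

section
/- Let x ∈ ℤ₂ (the 2-adic integers) satisfy |x − 3|₂ = 1, i.e. x − 3 is a unit in ℤ₂. Then: (i) the series S(x) = ∑_{k=1}^∞ C_{k−1}·2^k·(x−3)^{−2k} converges in ℚ₂, where C_m denotes the m-th Catalan number; (ii) T(x) := x² − 4x + 2 − (x−1)(x−3)·S(x) lies in ℤ₂ and satisfies T(x) ≡ x² (mod 2ℤ₂); and (iii) |T(x) − 3|₂ = |x − 3|₂² = 1, so the set {x ∈ ℤ₂ : |x−3|₂ = 1} is mapped to itself by T. -/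
/-!
Since `|x - 3|₂ = 1`, the `k`-th term of `S(x)` has norm `|C_{k-1}|₂ · 2^{-k} ≤ 2^{-k}`, so the
series converges and, by the ultrametric inequality, `|S(x)|₂ ≤ 1/2`.  Hence
`T(x) = (x² - 4x + 2) - ε` with `|ε|₂ ≤ 1/2`: `T(x)` is integral, `T(x) - x² = 2(1 - 2x) - ε` is
divisible by `2`, and `T(x) - 3 = (x - 3)(x - 1) - (4 + ε)` is a unit because `x - 1 = (x - 3) + 2`
is one.
-/

/-- The series `S(x) = ∑_{k≥1} C_{k-1}·2^k/(x-3)^{2k}` (with `C_m` the `m`-th Catalan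
number), viewed in `ℚ₂`. -/
noncomputable def Tseries (x : ℤ_[2]) : ℚ_[2] :=
  ∑' k : ℕ, (catalan k : ℚ_[2]) * 2 ^ (k + 1) / ((x : ℚ_[2]) - 3) ^ (2 * (k + 1))

/-- The 2-adic function `T(x) = x² - 4x + 2 - (x-1)(x-3)·S(x)`. -/
noncomputable def Tfrob (x : ℤ_[2]) : ℚ_[2] :=
  (x : ℚ_[2]) ^ 2 - 4 * (x : ℚ_[2]) + 2 -
    ((x : ℚ_[2]) - 1) * ((x : ℚ_[2]) - 3) * Tseries x

namespace IsUltrametricDist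

section Group

variable {S : Type*} [SeminormedAddGroup S] [IsUltrametricDist S]

lemma norm_sub_le_of_le {a b : S} {C : ℝ} (ha : ‖a‖ ≤ C) (hb : ‖b‖ ≤ C) : ‖a - b‖ ≤ C := by
  rw [sub_eq_add_neg]
  exact (norm_add_le_max a (-b)).trans (max_le ha ((norm_neg b).trans_le hb))

lemma norm_sub_eq_left_of_lt {a b : S} (h : ‖b‖ < ‖a‖) : ‖a - b‖ = ‖a‖ := by
  rw [sub_eq_add_neg, norm_add_eq_max_of_norm_ne_norm (by rw [norm_neg]; exact h.ne'),
    norm_neg, max_eq_left h.le]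

end Group

section Field

variable {K : Type*} [NormedField K] [IsUltrametricDist K] {u : K}

lemma norm_natCast_mul_pow_div_le (hu : ‖u‖ = 1) (n : ℕ) (π : K) (k m : ℕ) :
    ‖(n : K) * π ^ k / u ^ m‖ ≤ ‖π‖ ^ k := by
  rw [norm_div, norm_mul, norm_pow, norm_pow, hu, one_pow, div_one]
  exact mul_le_of_le_one_left (by positivity) (norm_natCast_le_one K n)

lemma summable_catalan_mul_pow_div [CompleteSpace K] (hu : ‖u‖ = 1) {π : K} (hπ : ‖π‖ < 1) :
    Summable fun k : ℕ => (catalan k : K) * π ^ (k + 1) / u ^ (2 * (k + 1)) := by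
  refine .of_norm_bounded (g := fun k => ‖π‖ ^ (k + 1)) ?_
    fun k => norm_natCast_mul_pow_div_le hu _ π _ _
  exact (summable_geometric_of_lt_one (norm_nonneg π) hπ).comp_injective (add_left_injective 1)

lemma norm_tsum_catalan_mul_pow_div_le (hu : ‖u‖ = 1) {π : K} (hπ : ‖π‖ ≤ 1) :
    ‖∑' k : ℕ, (catalan k : K) * π ^ (k + 1) / u ^ (2 * (k + 1))‖ ≤ ‖π‖ :=
  norm_tsum_le_of_forall_le_of_nonneg (norm_nonneg π) fun k =>
    (norm_natCast_mul_pow_div_le hu _ π _ _).trans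
      (pow_le_of_le_one (norm_nonneg π) hπ k.succ_ne_zero)

end Field

end IsUltrametricDist

open IsUltrametricDist

lemma Padic.norm_two : ‖(2 : ℚ_[2])‖ = 2⁻¹ := by
  simpa using Padic.norm_p (p := 2)

lemma PadicInt.norm_coe_sub_three (x : ℤ_[2]) : ‖(x : ℚ_[2]) - 3‖ = ‖x - 3‖ := by
  rw [← PadicInt.padic_norm_e_of_padicInt]
  norm_cast

section Tfrob

variable {x : ℤ_[2]}

lemma norm_Tseries_le (hx : ‖x - 3‖ = 1) : ‖Tseries x‖ ≤ 2⁻¹ := by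
  rw [← Padic.norm_two]
  exact norm_tsum_catalan_mul_pow_div_le (x.norm_coe_sub_three.trans hx)
    (by rw [Padic.norm_two]; norm_num)

lemma norm_Tfrob_correction_le (hx : ‖x - 3‖ = 1) :
    ‖((x : ℚ_[2]) - 1) * ((x : ℚ_[2]) - 3) * Tseries x‖ ≤ 2⁻¹ := by
  have hx1 : ‖(x : ℚ_[2]) - 1‖ ≤ 1 := by exact_mod_cast (x - 1).2
  rw [norm_mul, norm_mul, x.norm_coe_sub_three, hx, mul_one]
  exact mul_le_of_le_one_left (norm_nonneg _) hx1 |>.trans (norm_Tseries_le hx)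

lemma norm_Tfrob_le_one (hx : ‖x - 3‖ = 1) : ‖Tfrob x‖ ≤ 1 := by
  have hq : ‖(x : ℚ_[2]) ^ 2 - 4 * x + 2‖ ≤ 1 := by exact_mod_cast (x ^ 2 - 4 * x + 2).2
  exact norm_sub_le_of_le hq ((norm_Tfrob_correction_le hx).trans (by norm_num))

lemma norm_Tfrob_sub_sq_le (hx : ‖x - 3‖ = 1) : ‖Tfrob x - (x : ℚ_[2]) ^ 2‖ ≤ 2⁻¹ := by
  have h2 : ‖2 * (1 - 2 * (x : ℚ_[2]))‖ ≤ 2⁻¹ := by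
    rw [norm_mul, Padic.norm_two]
    exact mul_le_of_le_one_right (by norm_num) (by exact_mod_cast (1 - 2 * x).2)
  have heq : Tfrob x - (x : ℚ_[2]) ^ 2 =
      2 * (1 - 2 * (x : ℚ_[2])) - ((x : ℚ_[2]) - 1) * ((x : ℚ_[2]) - 3) * Tseries x := by
    unfold Tfrob; ring
  exact heq ▸ norm_sub_le_of_le h2 (norm_Tfrob_correction_le hx)

lemma norm_Tfrob_sub_three (hx : ‖x - 3‖ = 1) : ‖Tfrob x - 3‖ = 1 := by
  have h3 : ‖(x : ℚ_[2]) - 3‖ = 1 := x.norm_coe_sub_three.trans hx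
  have h1 : ‖(x : ℚ_[2]) - 1‖ = 1 := by
    have h2 : ‖(-2 : ℚ_[2])‖ < ‖(x : ℚ_[2]) - 3‖ := by
      rw [norm_neg, Padic.norm_two, h3]; norm_num
    calc ‖(x : ℚ_[2]) - 1‖ = ‖((x : ℚ_[2]) - 3) - -2‖ := by ring_nf
      _ = 1 := (norm_sub_eq_left_of_lt h2).trans h3
  have h4 : ‖4 + ((x : ℚ_[2]) - 1) * ((x : ℚ_[2]) - 3) * Tseries x‖ < 1 := by
    have : ‖(4 : ℚ_[2])‖ = 4⁻¹ := by
      rw [show (4 : ℚ_[2]) = 2 ^ 2 by norm_num, norm_pow, Padic.norm_two]; norm_num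
    refine (norm_add_le_max _ _).trans_lt (max_lt (by rw [this]; norm_num) ?_)
    exact (norm_Tfrob_correction_le hx).trans_lt (by norm_num)
  have heq : Tfrob x - 3 = ((x : ℚ_[2]) - 3) * ((x : ℚ_[2]) - 1) -
      (4 + ((x : ℚ_[2]) - 1) * ((x : ℚ_[2]) - 3) * Tseries x) := by
    unfold Tfrob; ring
  rw [heq, norm_sub_eq_left_of_lt, norm_mul, h3, h1, one_mul]
  rwa [norm_mul, h3, h1, one_mul]

end Tfrob

/-- Let `x ∈ ℤ₂` satisfy `|x - 3|₂ = 1`.  Then: (i) the series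
`S(x) = ∑_{k≥1} C_{k-1}·2^k·(x-3)^{-2k}` converges in `ℚ₂`; (ii)
`T(x) = x² - 4x + 2 - (x-1)(x-3)·S(x)` lies in `ℤ₂` and satisfies
`T(x) ≡ x² (mod 2ℤ₂)`; and (iii) `|T(x) - 3|₂ = |x - 3|₂² = 1`, so the set
`{x ∈ ℤ₂ : |x - 3|₂ = 1}` is mapped to itself by `T`. -/
theorem Tfrob_lift (x : ℤ_[2]) (hx : ‖x - 3‖ = 1) :
    Summable (fun k : ℕ =>
      (catalan k : ℚ_[2]) * 2 ^ (k + 1) / ((x : ℚ_[2]) - 3) ^ (2 * (k + 1))) ∧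
    ‖Tfrob x‖ ≤ 1 ∧
    ‖Tfrob x - (x : ℚ_[2]) ^ 2‖ ≤ 2⁻¹ ∧
    ‖Tfrob x - 3‖ = ‖x - 3‖ ^ 2 ∧ ‖Tfrob x - 3‖ = 1 := by
  refine ⟨summable_catalan_mul_pow_div (x.norm_coe_sub_three.trans hx)
      (by rw [Padic.norm_two]; norm_num), norm_Tfrob_le_one hx, norm_Tfrob_sub_sq_le hx, ?_,
    norm_Tfrob_sub_three hx⟩
  rw [norm_Tfrob_sub_three hx, hx, one_pow]
end
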